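/- arXiv:cond-mat/0304020 — 5 statements merged into one kernel-verified Lean document; each statement's English description precedes it below -/
import Mathlib

section
/- For all a > 0, ∫₀^∞ e^{-y}/(1+ay) dy ≤ a^{-1} log(1+a). -/
/-!
Substituting `t = 1 - e^{-y}` suggests comparing `1 + a y` with `1 + a (1 - e^{-y})`, which is
smaller since `1 - e^{-y} ≤ y`. The comparison integrand `e^{-y} / (1 + a (1 - e^{-y}))` has the
explicit primitive `a⁻¹ log (1 + a (1 - e^{-y}))`, which tends to `a⁻¹ log (1 + a)` at infinity.
-/

open MeasureTheory Real Set Filter Topology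

section

variable {a : ℝ}

lemma one_add_mul_one_sub_exp_neg_pos (ha : -1 < a) {y : ℝ} (hy : 0 ≤ y) :
    0 < 1 + a * (1 - exp (-y)) := by
  have h₀ : 0 ≤ 1 - exp (-y) := by linarith [exp_le_one_iff.mpr (neg_nonpos.mpr hy)]
  have h₁ : 1 - exp (-y) < 1 := by linarith [exp_pos (-y)]
  rcases le_or_gt 0 a with ha₀ | ha₀
  · positivity
  · nlinarith

lemma hasDerivAt_log_one_add_mul_one_sub_exp_neg (ha : -1 < a) (ha₀ : a ≠ 0) {y : ℝ}
    (hy : 0 ≤ y) :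
    HasDerivAt (fun y ↦ a⁻¹ * log (1 + a * (1 - exp (-y))))
      (exp (-y) / (1 + a * (1 - exp (-y)))) y := by
  have hinner : HasDerivAt (fun y ↦ 1 + a * (1 - exp (-y))) (a * exp (-y)) y := by
    simpa using (((hasDerivAt_neg y).exp.const_sub 1).const_mul a).const_add 1
  refine ((hinner.log (one_add_mul_one_sub_exp_neg_pos ha hy).ne').const_mul a⁻¹).congr_deriv ?_
  field_simp

lemma tendsto_log_one_add_mul_one_sub_exp_neg (ha : -1 < a) :
    Tendsto (fun y ↦ a⁻¹ * log (1 + a * (1 - exp (-y)))) atTop (𝓝 (a⁻¹ * log (1 + a))) := by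
  have hexp : Tendsto (fun y ↦ 1 + a * (1 - exp (-y))) atTop (𝓝 (1 + a)) := by
    simpa using ((tendsto_exp_neg_atTop_nhds_zero.const_sub 1).const_mul a).const_add 1
  exact ((continuousAt_log (by linarith)).tendsto.comp hexp).const_mul a⁻¹

lemma integrableOn_exp_neg_div_one_add_mul_one_sub_exp_neg (ha : -1 < a) (ha₀ : a ≠ 0) :
    IntegrableOn (fun y ↦ exp (-y) / (1 + a * (1 - exp (-y)))) (Ioi 0) :=
  integrableOn_Ioi_deriv_of_nonneg'
    (fun _ hy ↦ hasDerivAt_log_one_add_mul_one_sub_exp_neg ha ha₀ hy)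
    (fun _ hy ↦ (div_pos (exp_pos _) (one_add_mul_one_sub_exp_neg_pos ha (le_of_lt hy))).le)
    (tendsto_log_one_add_mul_one_sub_exp_neg ha)

lemma integral_exp_neg_div_one_add_mul_one_sub_exp_neg (ha : -1 < a) (ha₀ : a ≠ 0) :
    ∫ y in Ioi 0, exp (-y) / (1 + a * (1 - exp (-y))) = a⁻¹ * log (1 + a) := by
  rw [integral_Ioi_of_hasDerivAt_of_tendsto'
    (fun _ hy ↦ hasDerivAt_log_one_add_mul_one_sub_exp_neg ha ha₀ hy)
    (integrableOn_exp_neg_div_one_add_mul_one_sub_exp_neg ha ha₀)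
    (tendsto_log_one_add_mul_one_sub_exp_neg ha)]
  simp

end

theorem integral_exp_div_one_add_mul_le (a : ℝ) (ha : 0 < a) :
    ∫ y in Set.Ioi (0 : ℝ), Real.exp (-y) / (1 + a * y) ≤ a⁻¹ * Real.log (1 + a) := by
  have ha₁ : -1 < a := by linarith
  rw [← integral_exp_neg_div_one_add_mul_one_sub_exp_neg ha₁ ha.ne']
  refine integral_mono_of_nonneg ?_
    (integrableOn_exp_neg_div_one_add_mul_one_sub_exp_neg ha₁ ha.ne') ?_
  · filter_upwards [self_mem_ae_restrict measurableSet_Ioi] with y hy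
    have : 0 < 1 + a * y := by nlinarith [mem_Ioi.mp hy]
    positivity
  · filter_upwards [self_mem_ae_restrict measurableSet_Ioi] with y hy
    have hpos := one_add_mul_one_sub_exp_neg_pos ha₁ (le_of_lt hy)
    have hle : 1 - exp (-y) ≤ y := by linarith [one_sub_le_exp_neg y]
    gcongr
end

section
/- For all a, b > 0, |∫₀^∞ e^{-y}/(1+ay) dy − ∫₀^∞ e^{-y}/(1+by) dy| ≤ |b−a| / max{1, a, b}. -/
/-!
With `c = max a b`, the integrands differ by `e^{-y} |b - a| y / ((1 + a y)(1 + b y))`, which is at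
most `|b - a| e^{-y} y / (1 + c y)`. The integral of `e^{-y} y / (1 + c y)` is bounded both by
`∫ y e^{-y} = Γ(2) = 1` and by `∫ e^{-y} / c = 1 / c`.
-/

open MeasureTheory Real Set

lemma integrableOn_mul_exp_neg_Ioi : IntegrableOn (fun y : ℝ => y * exp (-y)) (Ioi 0) :=
  (GammaIntegral_convergent (s := 2) (by norm_num)).congr_fun
    (fun y _ => by norm_num [mul_comm]) measurableSet_Ioi

lemma integral_mul_exp_neg_Ioi : ∫ y in Ioi (0 : ℝ), y * exp (-y) = 1 := by
  rw [← Gamma_two, Gamma_eq_integral (by norm_num)]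
  refine setIntegral_congr_fun measurableSet_Ioi fun y _ => ?_
  norm_num [mul_comm]

lemma integrableOn_exp_neg_Ioi_zero : IntegrableOn (fun y : ℝ => exp (-y)) (Ioi 0) := by
  simpa using exp_neg_integrableOn_Ioi 0 one_pos

lemma integrableOn_exp_neg_div_one_add_mul {c : ℝ} (hc : 0 ≤ c) :
    IntegrableOn (fun y => exp (-y) / (1 + c * y)) (Ioi 0) := by
  refine integrableOn_exp_neg_Ioi_zero.mono'
    (by fun_prop : Measurable _).aestronglyMeasurable ?_
  filter_upwards [self_mem_ae_restrict measurableSet_Ioi] with y (hy : 0 < y)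
  rw [norm_of_nonneg (by positivity)]
  exact div_le_self (exp_nonneg _) (by nlinarith)

lemma integrableOn_exp_neg_mul_div_one_add_mul {c : ℝ} (hc : 0 ≤ c) :
    IntegrableOn (fun y => exp (-y) * (y / (1 + c * y))) (Ioi 0) := by
  refine integrableOn_mul_exp_neg_Ioi.mono' (by fun_prop) ?_
  filter_upwards [self_mem_ae_restrict measurableSet_Ioi] with y (hy : 0 < y)
  rw [norm_of_nonneg (by positivity), mul_comm]
  gcongr
  exact div_le_self hy.le (by nlinarith)

lemma integral_exp_neg_mul_div_one_add_mul_le {c : ℝ} (hc : 0 ≤ c) :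
    ∫ y in Ioi 0, exp (-y) * (y / (1 + c * y)) ≤ (max 1 c)⁻¹ := by
  have hint := integrableOn_exp_neg_mul_div_one_add_mul hc
  rcases le_total c 1 with hc1 | hc1
  · calc ∫ y in Ioi 0, exp (-y) * (y / (1 + c * y))
        ≤ ∫ y in Ioi 0, y * exp (-y) := by
          refine setIntegral_mono_on hint integrableOn_mul_exp_neg_Ioi measurableSet_Ioi
            fun y (hy : 0 < y) => ?_
          rw [mul_comm]
          gcongr
          exact div_le_self hy.le (by nlinarith)
      _ = (max 1 c)⁻¹ := by rw [integral_mul_exp_neg_Ioi, max_eq_left hc1, inv_one]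
  · have hc0 : 0 < c := by linarith
    calc ∫ y in Ioi 0, exp (-y) * (y / (1 + c * y))
        ≤ ∫ y in Ioi 0, exp (-y) * c⁻¹ := by
          refine setIntegral_mono_on hint (integrableOn_exp_neg_Ioi_zero.mul_const _)
            measurableSet_Ioi fun y (hy : 0 < y) => ?_
          gcongr
          rw [div_le_iff₀ (by positivity)]
          field_simp
          linarith
      _ = (max 1 c)⁻¹ := by
          rw [integral_mul_const, integral_exp_neg_Ioi_zero, one_mul, max_eq_right hc1]

lemma abs_inv_one_add_mul_sub_inv_one_add_mul_le {a b y : ℝ} (ha : 0 ≤ a) (hb : 0 ≤ b)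
    (hy : 0 ≤ y) :
    |(1 + a * y)⁻¹ - (1 + b * y)⁻¹| ≤ |b - a| * (y / (1 + max a b * y)) := by
  have hay : 0 < 1 + a * y := by positivity
  have hby : 0 < 1 + b * y := by positivity
  have hprod : 1 + max a b * y ≤ (1 + a * y) * (1 + b * y) := by
    rcases max_choice a b with h | h <;> rw [h] <;> nlinarith [mul_nonneg ha hy, mul_nonneg hb hy]
  rw [inv_sub_inv hay.ne' hby.ne', show 1 + b * y - (1 + a * y) = (b - a) * y by ring, abs_div,
    abs_mul, abs_of_nonneg hy, abs_of_pos (mul_pos hay hby), mul_div_assoc]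
  gcongr

theorem abs_integral_sub_integral_le (a b : ℝ) (ha : 0 < a) (hb : 0 < b) :
    |(∫ y in Set.Ioi (0 : ℝ), Real.exp (-y) / (1 + a * y)) -
      ∫ y in Set.Ioi (0 : ℝ), Real.exp (-y) / (1 + b * y)| ≤
      |b - a| / max 1 (max a b) := by
  have hc : 0 ≤ max a b := le_max_of_le_left ha.le
  have hpointwise : ∀ᵐ y ∂volume.restrict (Ioi 0),
      ‖exp (-y) / (1 + a * y) - exp (-y) / (1 + b * y)‖ ≤
        |b - a| * (exp (-y) * (y / (1 + max a b * y))) := by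
    filter_upwards [self_mem_ae_restrict measurableSet_Ioi] with y (hy : 0 < y)
    rw [norm_eq_abs, div_eq_mul_inv, div_eq_mul_inv, ← mul_sub, abs_mul, abs_of_pos (exp_pos _),
      mul_left_comm]
    gcongr
    exact abs_inv_one_add_mul_sub_inv_one_add_mul_le ha.le hb.le hy.le
  rw [← integral_sub (integrableOn_exp_neg_div_one_add_mul ha.le)
    (integrableOn_exp_neg_div_one_add_mul hb.le), ← norm_eq_abs]
  calc _ ≤ ∫ y in Ioi 0, |b - a| * (exp (-y) * (y / (1 + max a b * y))) :=
        norm_integral_le_of_norm_le ((integrableOn_exp_neg_mul_div_one_add_mul hc).const_mul _)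
          hpointwise
    _ ≤ |b - a| / max 1 (max a b) := by
        rw [integral_const_mul, div_eq_mul_inv]
        gcongr
        exact integral_exp_neg_mul_div_one_add_mul_le hc
end

section
/- Let W_ρ be the a.s. martingale limit of (1+2ρ)^{-n} M(n), where M(n) is the branching process with offspring distribution 1 + Poisson(2ρ) and M(0)=1. Then for all ψ ≥ 0, E[e^{-ψ W_ρ}] ≤ (1+ψ)^{-1}. -/
/-!
Write `φ(s) = s + 2ρ(1 - e^{-s})` (`succPoissonLaplaceExponent (2 * ρ)`), so that
`E e^{-s X} = e^{-φ(s)}` for an offspring count `X ~ 1 + Poisson(2ρ)`. Since `M(n+1)` is a sum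
of `M(n)` offspring counts independent of `M(n)`, `E e^{-s M(n+1)} = E e^{-φ(s) M(n)}`, hence
`E e^{-s M(n)} = e^{-φ^[n](s)}`. The elementary inequality `φ(log(1+t)) ≥ log(1+(1+2ρ)t)`,
iterated along the monotone map `φ`, together with `log(1+t) ≤ t`, gives
`φ^[n](ψ/(1+2ρ)^n) ≥ log(1+ψ)`. So `E exp(-ψ (1+2ρ)^{-n} M(n)) ≤ (1+ψ)⁻¹` for every `n`, and
dominated convergence passes the bound to `W`.
-/

open MeasureTheory ProbabilityTheory Real Finset
open scoped NNReal

lemma toMeasure_poissonPMF (r : ℝ≥0) : (poissonPMF r).toMeasure = poissonMeasure r := by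
  refine Measure.ext_iff_singleton.2 fun n => ?_
  rw [PMF.toMeasure_apply_singleton _ _ (measurableSet_singleton n), poissonMeasure_singleton,
    ← poissonPMFReal_ofReal_eq_poissonPMF, poissonPMFReal]

lemma integral_exp_mul_poissonMeasure (r : ℝ≥0) (t : ℝ) :
    ∫ n, exp (t * n) ∂poissonMeasure r = exp (r * (exp t - 1)) := by
  rw [integral_poissonMeasure]
  calc ∑' n : ℕ, (exp (-r) * r ^ n / n.factorial) • exp (t * n)
      = ∑' n : ℕ, exp (-r) * ((r * exp t) ^ n / n.factorial) := by
        congr with n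
        rw [smul_eq_mul, mul_pow, ← exp_nat_mul]
        ring_nf
    _ = exp (r * (exp t - 1)) := by
        rw [tsum_mul_left, (NormedSpace.expSeries_div_hasSum_exp _).tsum_eq, ← exp_eq_exp_ℝ,
          ← exp_add]
        ring_nf

noncomputable def succPoissonLaplaceExponent (r s : ℝ) : ℝ := s + r * (1 - exp (-s))

lemma integral_exp_neg_mul_map_succ_poissonMeasure (r : ℝ≥0) (s : ℝ) :
    ∫ n, exp (-s * n) ∂(poissonMeasure r).map (· + 1 : ℕ → ℕ) =
      exp (-succPoissonLaplaceExponent r s) := by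
  rw [integral_map .of_discrete .of_discrete]
  simp_rw [Nat.cast_add_one, mul_add_one, exp_add]
  rw [integral_mul_const, integral_exp_mul_poissonMeasure, ← exp_add, succPoissonLaplaceExponent]
  ring_nf

lemma integral_exp_neg_mul_of_map_eq_succ_poissonPMF {Ω : Type*} [MeasurableSpace Ω]
    {μ : Measure Ω} {Y : Ω → ℕ} (hY : Measurable Y) {r : ℝ≥0}
    (hlaw : μ.map Y = ((poissonPMF r).map (· + 1)).toMeasure) (s : ℝ) :
    ∫ ω, exp (-s * Y ω) ∂μ = exp (-succPoissonLaplaceExponent r s) := by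
  rw [← PMF.toMeasure_map _ _ (measurable_from_top (f := (· + 1 : ℕ → ℕ))),
    toMeasure_poissonPMF] at hlaw
  rw [← integral_exp_neg_mul_map_succ_poissonMeasure, ← hlaw,
    integral_map hY.aemeasurable .of_discrete]

section LaplaceExponent

variable {r : ℝ}

lemma monotone_succPoissonLaplaceExponent (hr : 0 ≤ r) :
    Monotone (succPoissonLaplaceExponent r) := by
  intro a b hab
  have := exp_le_exp.2 (neg_le_neg hab)
  unfold succPoissonLaplaceExponent
  nlinarith

lemma le_succPoissonLaplaceExponent (hr : 0 ≤ r) {s : ℝ} (hs : 0 ≤ s) :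
    s ≤ succPoissonLaplaceExponent r s := by
  have : exp (-s) ≤ 1 := exp_le_one_iff.2 (by linarith)
  unfold succPoissonLaplaceExponent
  nlinarith

lemma log_one_add_mul_le_succPoissonLaplaceExponent (hr : 0 ≤ r) {t : ℝ} (ht : 0 ≤ t) :
    log (1 + (1 + r) * t) ≤ succPoissonLaplaceExponent r (log (1 + t)) := by
  have h1t : 0 < 1 + t := by linarith
  have hsplit : 1 + (1 + r) * t = (1 + t) * (1 + r * t / (1 + t)) := by field_simp; ring
  have hexp : succPoissonLaplaceExponent r (log (1 + t)) = log (1 + t) + r * t / (1 + t) := by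
    rw [succPoissonLaplaceExponent, exp_neg, exp_log h1t]
    field_simp
    ring
  have hlog := log_le_sub_one_of_pos (show 0 < 1 + r * t / (1 + t) by positivity)
  rw [hsplit, log_mul h1t.ne' (by positivity), hexp]
  linarith

lemma log_one_add_pow_mul_le_iterate (hr : 0 ≤ r) (n : ℕ) {t : ℝ} (ht : 0 ≤ t) :
    log (1 + (1 + r) ^ n * t) ≤ (succPoissonLaplaceExponent r)^[n] (log (1 + t)) := by
  induction n generalizing t with
  | zero => simp
  | succ n ih =>
    calc log (1 + (1 + r) ^ (n + 1) * t) = log (1 + (1 + r) ^ n * ((1 + r) * t)) := by ring_nf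
      _ ≤ (succPoissonLaplaceExponent r)^[n] (log (1 + (1 + r) * t)) := ih (by positivity)
      _ ≤ (succPoissonLaplaceExponent r)^[n + 1] (log (1 + t)) := by
        rw [Function.iterate_succ_apply]
        exact (monotone_succPoissonLaplaceExponent hr).iterate n
          (log_one_add_mul_le_succPoissonLaplaceExponent hr ht)

lemma log_one_add_le_iterate_div_pow (hr : 0 ≤ r) (n : ℕ) {ψ : ℝ} (hψ : 0 ≤ ψ) :
    log (1 + ψ) ≤ (succPoissonLaplaceExponent r)^[n] (ψ / (1 + r) ^ n) := by
  have hpow : 0 < (1 + r) ^ n := by positivity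
  have ht : 0 ≤ ψ / (1 + r) ^ n := by positivity
  calc log (1 + ψ) = log (1 + (1 + r) ^ n * (ψ / (1 + r) ^ n)) := by
        rw [mul_div_cancel₀ _ hpow.ne']
    _ ≤ (succPoissonLaplaceExponent r)^[n] (log (1 + ψ / (1 + r) ^ n)) :=
        log_one_add_pow_mul_le_iterate hr n ht
    _ ≤ (succPoissonLaplaceExponent r)^[n] (ψ / (1 + r) ^ n) :=
        (monotone_succPoissonLaplaceExponent hr).iterate n <| by
          linarith [log_le_sub_one_of_pos (show 0 < 1 + ψ / (1 + r) ^ n by positivity)]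

end LaplaceExponent

lemma measurable_sum_range : Measurable fun p : ℕ × (ℕ → ℕ) => ∑ i ∈ range p.1, p.2 i :=
  measurable_from_prod_countable_right fun m =>
    Finset.measurable_sum (range m) fun i _ => measurable_pi_apply i

lemma norm_exp_neg_mul_le_one {a b : ℝ} (ha : 0 ≤ a) (hb : 0 ≤ b) : ‖exp (-a * b)‖ ≤ 1 := by
  rw [norm_of_nonneg (exp_pos _).le, exp_le_one_iff]
  nlinarith

theorem integral_exp_neg_mul_sum_range_of_indepFun {Ω : Type*} [MeasurableSpace Ω]
    {μ : Measure Ω} [IsProbabilityMeasure μ] {N : Ω → ℕ} {Y : ℕ → Ω → ℕ}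
    (hN : Measurable N) (hY : ∀ i, Measurable (Y i)) (hindep : iIndepFun Y μ)
    (hNY : IndepFun N (fun ω i => Y i ω) μ) {s L : ℝ} (hs : 0 ≤ s)
    (hL : ∀ i, ∫ ω, exp (-s * Y i ω) ∂μ = L) :
    ∫ ω, exp (-s * ((∑ i ∈ range (N ω), Y i ω : ℕ) : ℝ)) ∂μ = ∫ ω, L ^ N ω ∂μ := by
  have hYv : Measurable fun ω i => Y i ω := measurable_pi_lambda _ hY
  set Φ : ℕ × (ℕ → ℕ) → ℝ := fun p => exp (-s * ((∑ i ∈ range p.1, p.2 i : ℕ) : ℝ)) with hΦ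
  have hΦm : Measurable Φ :=
    (Measurable.of_discrete (f := fun k : ℕ => exp (-s * (k : ℝ)))).comp measurable_sum_range
  have hΦint : Integrable Φ ((μ.map N).prod (μ.map fun ω i => Y i ω)) :=
    Integrable.of_bound hΦm.aestronglyMeasurable 1
      (ae_of_all _ fun p => norm_exp_neg_mul_le_one hs (Nat.cast_nonneg _))
  have hinner : ∀ m, ∫ y, Φ (m, y) ∂(μ.map fun ω i => Y i ω) = L ^ m := by
    intro m
    have hreal : iIndepFun (fun i ω => (Y i ω : ℝ)) μ :=
      hindep.comp (fun _ => Nat.cast) (fun _ => measurable_from_top)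
    rw [integral_map (f := fun y => Φ (m, y)) hYv.aemeasurable
      (hΦm.comp measurable_prodMk_left).aestronglyMeasurable]
    have hmgf := hreal.mgf_sum (fun i => measurable_from_top.comp (hY i)) (range m) (t := -s)
    simp only [mgf, Finset.sum_apply, hL, prod_const, card_range] at hmgf
    simpa [hΦ] using hmgf
  calc ∫ ω, Φ (N ω, fun i => Y i ω) ∂μ
      = ∫ p, Φ p ∂μ.map fun ω => (N ω, fun i => Y i ω) :=
        (integral_map (hN.prodMk hYv).aemeasurable hΦm.aestronglyMeasurable).symm
    _ = ∫ p, Φ p ∂(μ.map N).prod (μ.map fun ω i => Y i ω) := by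
        rw [(indepFun_iff_map_prod_eq_prod_map_map hN.aemeasurable hYv.aemeasurable).1 hNY]
    _ = ∫ m, ∫ y, Φ (m, y) ∂(μ.map fun ω i => Y i ω) ∂μ.map N := integral_prod Φ hΦint
    _ = ∫ m, L ^ m ∂μ.map N := by simp_rw [hinner]
    _ = ∫ ω, L ^ N ω ∂μ := integral_map hN.aemeasurable .of_discrete

section GaltonWatson

variable {Ω : Type*} {X : ℕ → ℕ → Ω → ℕ} {M : ℕ → Ω → ℕ}

abbrev offspringSigma (X : ℕ → ℕ → Ω → ℕ) (S : Set (ℕ × ℕ)) : MeasurableSpace Ω :=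
  ⨆ p ∈ S, MeasurableSpace.comap (X p.1 p.2) inferInstance

lemma measurable_offspringSigma {S : Set (ℕ × ℕ)} {k : ℕ} (hS : ∀ i, (k, i) ∈ S) :
    Measurable[offspringSigma X S] fun ω i => X k i ω :=
  @measurable_pi_lambda Ω ℕ (fun _ => ℕ) (offspringSigma X S) _ _ fun i =>
    Measurable.of_comap_le <|
      le_biSup (fun p : ℕ × ℕ => MeasurableSpace.comap (X p.1 p.2) inferInstance) (hS i)

lemma measurable_galtonWatson_offspringSigma (hM0 : ∀ ω, M 0 ω = 1)
    (hMrec : ∀ n ω, M (n + 1) ω = ∑ i ∈ range (M n ω), X n i ω) (n : ℕ) :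
    Measurable[offspringSigma X {q | q.1 < n}] (M n) := by
  induction n with
  | zero => simp only [funext hM0, measurable_const]
  | succ n ih =>
    have hM : Measurable[offspringSigma X {q | q.1 < n + 1}] (M n) :=
      ih.mono (biSup_mono fun _ => Nat.lt_succ_of_lt) le_rfl
    rw [funext (hMrec n)]
    exact measurable_sum_range.comp
      (hM.prodMk (measurable_offspringSigma fun _ => n.lt_succ_self))

lemma measurable_galtonWatson [MeasurableSpace Ω] (hXm : ∀ n i, Measurable (X n i))
    (hM0 : ∀ ω, M 0 ω = 1) (hMrec : ∀ n ω, M (n + 1) ω = ∑ i ∈ range (M n ω), X n i ω) (n : ℕ) :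
    Measurable (M n) :=
  (measurable_galtonWatson_offspringSigma hM0 hMrec n).mono
    (iSup₂_le fun p _ => (hXm p.1 p.2).comap_le) le_rfl

lemma indepFun_galtonWatson_offspring [MeasurableSpace Ω] {μ : Measure Ω}
    (hXm : ∀ n i, Measurable (X n i))
    (hindep : iIndepFun (fun p : ℕ × ℕ => X p.1 p.2) μ) (hM0 : ∀ ω, M 0 ω = 1)
    (hMrec : ∀ n ω, M (n + 1) ω = ∑ i ∈ range (M n ω), X n i ω) (n : ℕ) :
    IndepFun (M n) (fun ω i => X n i ω) μ := by
  have hsep : Indep (offspringSigma X {q | q.1 < n}) (offspringSigma X {q | q.1 = n}) μ :=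
    indep_iSup_of_disjoint
      (m := fun p : ℕ × ℕ => MeasurableSpace.comap (X p.1 p.2) inferInstance)
      (fun p => (hXm p.1 p.2).comap_le) hindep (Set.disjoint_left.2 fun q h1 h2 => by simp_all)
  exact indep_of_indep_of_le_right (indep_of_indep_of_le_left hsep
    (measurable_galtonWatson_offspringSigma hM0 hMrec n).comap_le)
    (measurable_offspringSigma fun _ => rfl).comap_le

lemma integral_exp_neg_mul_galtonWatson_succ [MeasurableSpace Ω] {μ : Measure Ω}
    [IsProbabilityMeasure μ] (hXm : ∀ n i, Measurable (X n i))
    (hindep : iIndepFun (fun p : ℕ × ℕ => X p.1 p.2) μ) (hM0 : ∀ ω, M 0 ω = 1)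
    (hMrec : ∀ n ω, M (n + 1) ω = ∑ i ∈ range (M n ω), X n i ω) {φ : ℝ → ℝ} {s : ℝ}
    (hs : 0 ≤ s) (hφ : ∀ n i, ∫ ω, exp (-s * X n i ω) ∂μ = exp (-φ s)) (n : ℕ) :
    ∫ ω, exp (-s * M (n + 1) ω) ∂μ = ∫ ω, exp (-φ s * M n ω) ∂μ := by
  have hgen : iIndepFun (X n) μ :=
    hindep.precomp (g := Prod.mk n) (Prod.mk_right_injective n)
  simp_rw [hMrec n, integral_exp_neg_mul_sum_range_of_indepFun
    (measurable_galtonWatson hXm hM0 hMrec n) (hXm n) hgen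
    (indepFun_galtonWatson_offspring hXm hindep hM0 hMrec n) hs (hφ n), mul_comm (-φ s),
    exp_nat_mul]

lemma integral_exp_neg_mul_galtonWatson [MeasurableSpace Ω] {μ : Measure Ω}
    [IsProbabilityMeasure μ] (hXm : ∀ n i, Measurable (X n i))
    (hindep : iIndepFun (fun p : ℕ × ℕ => X p.1 p.2) μ) (hM0 : ∀ ω, M 0 ω = 1)
    (hMrec : ∀ n ω, M (n + 1) ω = ∑ i ∈ range (M n ω), X n i ω) {φ : ℝ → ℝ}
    (hφ : ∀ s, 0 ≤ s → ∀ n i, ∫ ω, exp (-s * X n i ω) ∂μ = exp (-φ s))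
    (hφ_nonneg : ∀ s, 0 ≤ s → 0 ≤ φ s) (n : ℕ) {s : ℝ} (hs : 0 ≤ s) :
    ∫ ω, exp (-s * M n ω) ∂μ = exp (-φ^[n] s) := by
  induction n generalizing s with
  | zero => simp [hM0]
  | succ n ih =>
    rw [integral_exp_neg_mul_galtonWatson_succ hXm hindep hM0 hMrec hs (hφ s hs),
      ih (hφ_nonneg s hs), Function.iterate_succ_apply]

end GaltonWatson

theorem gw_limit_laplace_le_general (Ω : Type*) [MeasurableSpace Ω] (μ : Measure Ω)
    [IsProbabilityMeasure μ] (ρ : ℝ) (hρ : 0 < ρ)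
    (X : ℕ → ℕ → Ω → ℕ) (M : ℕ → Ω → ℕ)
    (hXm : ∀ n i, Measurable (X n i))
    (hindep : iIndepFun (fun p : ℕ × ℕ => X p.1 p.2) μ)
    (hXd : ∀ n i, μ.map (X n i) =
      ((poissonPMF (2 * ρ).toNNReal).map (· + 1)).toMeasure)
    (hM0 : ∀ ω, M 0 ω = 1)
    (hMrec : ∀ n ω, M (n + 1) ω = ∑ i ∈ Finset.range (M n ω), X n i ω)
    (W : Ω → ℝ)
    (hWlim : ∀ᵐ ω ∂μ, Filter.Tendsto
      (fun n => ((1 + 2 * ρ) ^ n)⁻¹ * (M n ω : ℝ)) Filter.atTop (nhds (W ω)))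
    (ψ : ℝ) (hψ : 0 ≤ ψ) :
    (∫ ω, Real.exp (-ψ * W ω) ∂μ) ≤ (1 + ψ)⁻¹ := by
  have hr : 0 ≤ 2 * ρ := by positivity
  have hlaw : ∀ s, 0 ≤ s → ∀ n i,
      ∫ ω, exp (-s * X n i ω) ∂μ = exp (-succPoissonLaplaceExponent (2 * ρ) s) :=
    fun s _ n i => by
    rw [integral_exp_neg_mul_of_map_eq_succ_poissonPMF (hXm n i) (hXd n i), coe_toNNReal _ hr]
  have hbound : ∀ n, ∫ ω, exp (-ψ * (((1 + 2 * ρ) ^ n)⁻¹ * M n ω)) ∂μ ≤ (1 + ψ)⁻¹ := fun n =>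
    calc ∫ ω, exp (-ψ * (((1 + 2 * ρ) ^ n)⁻¹ * M n ω)) ∂μ
        = ∫ ω, exp (-(ψ / (1 + 2 * ρ) ^ n) * M n ω) ∂μ := by
          simp_rw [neg_mul, div_eq_mul_inv, mul_assoc]
      _ = exp (-(succPoissonLaplaceExponent (2 * ρ))^[n] (ψ / (1 + 2 * ρ) ^ n)) :=
        integral_exp_neg_mul_galtonWatson hXm hindep hM0 hMrec hlaw
          (fun s hs => hs.trans (le_succPoissonLaplaceExponent hr hs)) n (by positivity)
      _ ≤ exp (-log (1 + ψ)) :=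
        exp_le_exp.2 (neg_le_neg (log_one_add_le_iterate_div_pow hr n hψ))
      _ = (1 + ψ)⁻¹ := by rw [exp_neg, exp_log (by linarith)]
  refine le_of_tendsto (tendsto_integral_of_dominated_convergence (fun _ => 1) (fun n => ?_)
    (integrable_const 1) (fun n => ae_of_all _ fun ω => ?_) ?_) (.of_forall hbound)
  · exact ((Measurable.of_discrete
      (f := fun k : ℕ => exp (-ψ * (((1 + 2 * ρ) ^ n)⁻¹ * k)))).comp
        (measurable_galtonWatson hXm hM0 hMrec n)).aestronglyMeasurable
  · exact norm_exp_neg_mul_le_one hψ (by positivity)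
  · filter_upwards [hWlim] with ω hω using (continuous_exp.tendsto _).comp (hω.const_mul (-ψ))

/-- Let `W_ρ` be the a.s. limit of the martingale `(1+2ρ)^{-n} M(n)`, where
`M(n)` is the Galton–Watson process with offspring distribution
`1 + Poisson(2ρ)` and `M(0) = 1`. Then `E[e^{-ψ W_ρ}] ≤ (1+ψ)⁻¹` for `ψ ≥ 0`. -/
theorem gw_limit_laplace_le (Ω : Type*) [MeasurableSpace Ω] (μ : Measure Ω)
    [IsProbabilityMeasure μ] (ρ : ℝ) (hρ : 0 < ρ)
    (X : ℕ → ℕ → Ω → ℕ) (M : ℕ → Ω → ℕ)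
    (hXm : ∀ n i, Measurable (X n i))
    (hindep : iIndepFun (fun p : ℕ × ℕ => X p.1 p.2) μ)
    (hXd : ∀ n i, μ.map (X n i) =
      ((poissonPMF (2 * ρ).toNNReal).map (· + 1)).toMeasure)
    (hM0 : ∀ ω, M 0 ω = 1)
    (hMrec : ∀ n ω, M (n + 1) ω = ∑ i ∈ Finset.range (M n ω), X n i ω)
    (W : Ω → ℝ) (hWm : Measurable W)
    (hWlim : ∀ᵐ ω ∂μ, Filter.Tendsto
      (fun n => ((1 + 2 * ρ) ^ n)⁻¹ * (M n ω : ℝ)) Filter.atTop (nhds (W ω)))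
    (ψ : ℝ) (hψ : 0 ≤ ψ) :
    (∫ ω, Real.exp (-ψ * W ω) ∂μ) ≤ (1 + ψ)⁻¹ :=
  gw_limit_laplace_le_general Ω μ ρ hρ X M hXm hindep hXd hM0 hMrec W hWlim ψ hψ
end

section
/- Let φ_e(θ) = (1+θ)^{-1} and define Ψφ_e(θ) = f(φ_e(θ/m)) with f(s) = s·e^{2ρ(s−1)} and m = 1+2ρ, ρ > 0. Then sup_{θ>0} θ^{-2}|Ψφ_e(θ) − φ_e(θ)| ≤ 2ρ²/(1+2ρ)². -/
/-!
Put `m = 1 + 2ρ` and `x = 2ρθ/(m + θ)`. Then `φ_e(θ/m) = (1 + x)/(1 + θ)` and the exponent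
`2ρ(φ_e(θ/m) - 1)` equals `-x`, so the difference is `(1 + θ)⁻¹((1 + x)e⁻ˣ - 1)`. The bracket is
at most `x²/2 ≤ (2ρθ/m)²/2` in absolute value, and `(1 + θ)⁻¹ ≤ 1`.
-/

open Real

lemma one_sub_sq_div_two_le_one_add_mul_exp_neg {x : ℝ} (hx : 0 ≤ x) :
    1 - x ^ 2 / 2 ≤ (1 + x) * exp (-x) := by
  let g : ℝ → ℝ := fun t => (1 + t) * exp (-t) + t ^ 2 / 2
  have hg : ∀ t, HasDerivAt g (t * (1 - exp (-t))) t := by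
    intro t
    have := (((hasDerivAt_id t).const_add 1).mul (hasDerivAt_neg t).exp).add
      ((hasDerivAt_pow 2 t).div_const 2)
    exact this.congr_deriv (by simp only [id]; ring)
  have hmono : MonotoneOn g (Set.Ici 0) := by
    refine monotoneOn_of_deriv_nonneg (convex_Ici 0)
      (fun t _ => (hg t).continuousAt.continuousWithinAt)
      (fun t _ => (hg t).differentiableAt.differentiableWithinAt) fun t ht => ?_
    rw [interior_Ici, Set.mem_Ioi] at ht
    rw [(hg t).deriv]
    exact mul_nonneg ht.le (sub_nonneg.2 (exp_le_one_iff.2 (neg_nonpos.2 ht.le)))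
  have := hmono Set.self_mem_Ici hx hx
  norm_num [g] at this
  linarith

lemma one_add_mul_exp_neg_le_one (x : ℝ) : (1 + x) * exp (-x) ≤ 1 := by
  calc (1 + x) * exp (-x) ≤ exp x * exp (-x) := by
        gcongr
        linarith [add_one_le_exp x]
    _ = 1 := by rw [← exp_add, add_neg_cancel, exp_zero]

lemma abs_one_add_mul_exp_neg_sub_one_le {x : ℝ} (hx : 0 ≤ x) :
    |(1 + x) * exp (-x) - 1| ≤ x ^ 2 / 2 := by
  rw [abs_le]
  constructor
  · linarith [one_sub_sq_div_two_le_one_add_mul_exp_neg hx]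
  · linarith [one_add_mul_exp_neg_le_one x, sq_nonneg x]

lemma inv_one_add_div_mul_exp_sub_inv_one_add {ρ θ : ℝ} (hm : 0 < 1 + 2 * ρ) (hθ : 0 ≤ θ) :
    (1 + θ / (1 + 2 * ρ))⁻¹ * exp (2 * ρ * ((1 + θ / (1 + 2 * ρ))⁻¹ - 1)) - (1 + θ)⁻¹ =
      (1 + θ)⁻¹ * ((1 + 2 * ρ * θ / (1 + 2 * ρ + θ)) *
        exp (-(2 * ρ * θ / (1 + 2 * ρ + θ))) - 1) := by
  have hmθ : 1 + 2 * ρ + θ ≠ 0 := by positivity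
  have hθ₁ : 1 + θ ≠ 0 := by positivity
  have hexp : 2 * ρ * ((1 + θ / (1 + 2 * ρ))⁻¹ - 1) = -(2 * ρ * θ / (1 + 2 * ρ + θ)) := by
    field_simp
    ring
  have hbase : (1 + θ / (1 + 2 * ρ))⁻¹ = (1 + θ)⁻¹ * (1 + 2 * ρ * θ / (1 + 2 * ρ + θ)) := by
    field_simp
    ring
  rw [hexp, hbase]
  ring

/-- With `φ_e(θ) = (1+θ)⁻¹`, `f(s) = s·exp(2ρ(s-1))`, `m = 1+2ρ`, one has
`sup_{θ>0} θ⁻²|f(φ_e(θ/m)) - φ_e(θ)| ≤ 2ρ²/(1+2ρ)²`, stated pointwise. -/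
theorem Psi_phie_close (ρ : ℝ) (hρ : 0 < ρ) :
    ∀ θ > 0,
      |(1 + θ / (1 + 2 * ρ))⁻¹ *
          Real.exp (2 * ρ * ((1 + θ / (1 + 2 * ρ))⁻¹ - 1)) - (1 + θ)⁻¹| ≤
        2 * ρ ^ 2 / (1 + 2 * ρ) ^ 2 * θ ^ 2 := by
  intro θ hθ
  have hm : 0 < 1 + 2 * ρ := by positivity
  set x := 2 * ρ * θ / (1 + 2 * ρ + θ)
  have hx : 0 ≤ x := by positivity
  have hx_le : x ≤ 2 * ρ * θ / (1 + 2 * ρ) :=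
    div_le_div_of_nonneg_left (by positivity) hm (by linarith)
  have hinv : (1 + θ)⁻¹ ≤ 1 := inv_le_one_of_one_le₀ (by linarith)
  rw [inv_one_add_div_mul_exp_sub_inv_one_add hm hθ.le, abs_mul,
    abs_of_pos (by positivity : (0 : ℝ) < (1 + θ)⁻¹)]
  calc (1 + θ)⁻¹ * |(1 + x) * exp (-x) - 1|
      ≤ 1 * (x ^ 2 / 2) := by
        gcongr
        exact abs_one_add_mul_exp_neg_sub_one_le hx
    _ ≤ (2 * ρ * θ / (1 + 2 * ρ)) ^ 2 / 2 := by
        rw [one_mul]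
        gcongr
    _ = 2 * ρ ^ 2 / (1 + 2 * ρ) ^ 2 * θ ^ 2 := by field_simp
end

section
/- Fix σ > 0, integers k ≥ 1 and Λ ≥ 1 with σ ≤ Λ, and let λ > 1 be the largest root of (t−1)(t−σ) = 2kσ. Define the sequences of functions φ_{1,n}, φ_{2,n} on [0,∞) by φ_{1,0}(θ) = e^{−θ}, φ_{2,0}(θ) = e^{−θ(λ−σ)}, and the Poincaré recursion φ_{1,n+1}(θ) = φ_{2,n}(θ/λ)·((σ/Λ)φ_{1,n}(θ/λ) + 1 − σ/Λ)^Λ, φ_{2,n+1}(θ) = φ_{2,n}(θ/λ)·((σ/Λ)φ_{1,n}(θ/λ) + 1 − σ/Λ)^{2kΛ}. Then for every n ≥ 0 and θ > 0, φ_{1,n}(θ) ≤ 1/(1+θ) and φ_{2,n}(θ) ≤ 1/(1+θ(λ−σ)). -/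
/-!
Write `μ = λ - σ`, `s = σ / Λ` and `x = θ / λ`. By induction, `φ₁ n x ≤ (1 + x)⁻¹` gives
`s φ₁ n x + 1 - s ≤ 1 - s x / (1 + x) ≤ exp (-s x / (1 + x))`, so the `m`-th power of the
mixing factor is at most `(1 + m s x / (1 + x))⁻¹`. Together with `φ₂ n x ≤ (1 + μ x)⁻¹` and
`μ ≥ 1` this bounds the product by `(1 + (μ + m s) x)⁻¹`. For `m = Λ` we have `μ + m s = λ`, and
for `m = 2kΛ` the characteristic equation gives `μ + m s = μ + (λ - 1) μ = λ μ`.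
-/

open Set

lemma exp_neg_le_inv_one_add {t : ℝ} (ht : -1 < t) : Real.exp (-t) ≤ (1 + t)⁻¹ := by
  rw [Real.exp_neg]
  exact inv_anti₀ (by linarith) (by linarith [Real.add_one_le_exp t])

lemma pow_le_inv_one_add_mul {A t : ℝ} (hA : 0 ≤ A) (hAt : A ≤ 1 - t) (ht : 0 ≤ t) (m : ℕ) :
    A ^ m ≤ (1 + m * t)⁻¹ :=
  calc A ^ m ≤ Real.exp (-t) ^ m := pow_le_pow_left₀ hA (hAt.trans (Real.one_sub_le_exp_neg t)) m
    _ = Real.exp (-(m * t)) := by rw [← Real.exp_nat_mul]; ring_nf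
    _ ≤ (1 + m * t)⁻¹ := exp_neg_le_inv_one_add (by linarith [mul_nonneg m.cast_nonneg ht])

lemma mix_pow_le {s x p : ℝ} (hs0 : 0 ≤ s) (hs1 : s ≤ 1) (hx : 0 ≤ x)
    (hp : p ∈ Icc 0 (1 + x)⁻¹) (m : ℕ) :
    (s * p + 1 - s) ^ m ≤ (1 + m * s * (x / (1 + x)))⁻¹ := by
  have hinv : (1 + x)⁻¹ = 1 - x / (1 + x) := by field_simp; ring
  rw [mul_assoc]
  refine pow_le_inv_one_add_mul (by nlinarith [hp.1]) ?_ (by positivity) m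
  nlinarith [mul_le_mul_of_nonneg_left hp.2 hs0]

lemma inv_mul_inv_le_inv_one_add {μ a x : ℝ} (hμ : 1 ≤ μ) (ha : 0 ≤ a) (hx : 0 ≤ x) :
    (1 + μ * x)⁻¹ * (1 + a * (x / (1 + x)))⁻¹ ≤ (1 + (μ + a) * x)⁻¹ := by
  rw [← mul_inv]
  refine inv_anti₀ (by positivity) ?_
  rw [mul_div_assoc', one_add_div (by positivity), mul_div_assoc', le_div_iff₀ (by positivity)]
  nlinarith [mul_nonneg (mul_nonneg ha (mul_nonneg hx hx)) (sub_nonneg.2 hμ)]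

lemma poincare_step_mem {μ s x p q : ℝ} (hμ : 1 ≤ μ) (hs0 : 0 ≤ s) (hs1 : s ≤ 1) (hx : 0 ≤ x)
    (hp : p ∈ Icc 0 (1 + x)⁻¹) (hq : q ∈ Icc 0 (1 + μ * x)⁻¹) (m : ℕ) :
    q * (s * p + 1 - s) ^ m ∈ Icc 0 (1 + (μ + m * s) * x)⁻¹ := by
  have hA : 0 ≤ s * p + 1 - s := by nlinarith [hp.1]
  refine ⟨mul_nonneg hq.1 (pow_nonneg hA m), ?_⟩
  calc q * (s * p + 1 - s) ^ m ≤ (1 + μ * x)⁻¹ * (1 + m * s * (x / (1 + x)))⁻¹ :=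
        mul_le_mul hq.2 (mix_pow_le hs0 hs1 hx hp m) (pow_nonneg hA m) (by positivity)
    _ ≤ (1 + (μ + m * s) * x)⁻¹ := inv_mul_inv_le_inv_one_add hμ (by positivity) hx

theorem poincare_iterates_dominated_general (σ : ℝ) (hσ : 0 < σ) (k Λ : ℕ)
    (hσΛ : σ ≤ Λ)
    (l : ℝ) (hroot : (l - 1) * (l - σ) = 2 * k * σ) (hl : σ + 1 < l)
    (φ1 φ2 : ℕ → ℝ → ℝ)
    (h10 : ∀ θ, φ1 0 θ = Real.exp (-θ))
    (h20 : ∀ θ, φ2 0 θ = Real.exp (-(θ * (l - σ))))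
    (h1 : ∀ n θ, φ1 (n + 1) θ =
      φ2 n (θ / l) * ((σ / Λ) * φ1 n (θ / l) + 1 - σ / Λ) ^ (Λ : ℕ))
    (h2 : ∀ n θ, φ2 (n + 1) θ =
      φ2 n (θ / l) * ((σ / Λ) * φ1 n (θ / l) + 1 - σ / Λ) ^ (2 * k * Λ)) :
    ∀ n, ∀ θ > 0, φ1 n θ ≤ (1 + θ)⁻¹ ∧ φ2 n θ ≤ (1 + θ * (l - σ))⁻¹ := by
  have hΛ : (0 : ℝ) < Λ := hσ.trans_le hσΛ
  have hl0 : 0 < l := by linarith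
  have hμ : 1 ≤ l - σ := by linarith
  have hs0 : 0 ≤ σ / Λ := by positivity
  have hs1 : σ / Λ ≤ 1 := (div_le_one hΛ).2 hσΛ
  have hscale1 : ∀ θ, (l - σ + Λ * (σ / Λ)) * (θ / l) = θ := fun θ => by
    field_simp; ring
  have hscale2 : ∀ θ, (l - σ + ((2 * k * Λ : ℕ) : ℝ) * (σ / Λ)) * (θ / l) = θ * (l - σ) := fun θ => by
    push_cast; field_simp; linear_combination -θ * hroot
  have key : ∀ n, ∀ θ ≥ 0, φ1 n θ ∈ Icc 0 (1 + θ)⁻¹ ∧ φ2 n θ ∈ Icc 0 (1 + θ * (l - σ))⁻¹ := by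
    intro n
    induction n with
    | zero =>
      intro θ hθ
      rw [h10, h20]
      exact ⟨⟨(Real.exp_pos _).le, exp_neg_le_inv_one_add (by linarith)⟩,
        ⟨(Real.exp_pos _).le, exp_neg_le_inv_one_add (by nlinarith)⟩⟩
    | succ n ih =>
      intro θ hθ
      have hx : 0 ≤ θ / l := div_nonneg hθ hl0.le
      obtain ⟨hp, hq⟩ := ih (θ / l) hx
      rw [mul_comm _ (l - σ)] at hq
      rw [h1, h2]
      refine ⟨?_, ?_⟩
      · simpa only [hscale1] using poincare_step_mem hμ hs0 hs1 hx hp hq Λ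
      · simpa only [hscale2] using poincare_step_mem hμ hs0 hs1 hx hp hq (2 * k * Λ)
  exact fun n θ hθ => ⟨(key n θ hθ.le).1.2, (key n θ hθ.le).2.2⟩

/-- The iterates of the Poincaré recursion for the two-type branching process of
the discrete small-world model, started from the Laplace transforms of the
initial generation, are dominated by `(1+θ)⁻¹` resp. `(1+θ(λ-σ))⁻¹`. -/
theorem poincare_iterates_dominated (σ : ℝ) (hσ : 0 < σ) (k Λ : ℕ)
    (hk : 1 ≤ k) (hΛ : 1 ≤ Λ) (hσΛ : σ ≤ Λ)
    (l : ℝ) (hroot : (l - 1) * (l - σ) = 2 * k * σ) (hl : σ + 1 < l)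
    (φ1 φ2 : ℕ → ℝ → ℝ)
    (h10 : ∀ θ, φ1 0 θ = Real.exp (-θ))
    (h20 : ∀ θ, φ2 0 θ = Real.exp (-(θ * (l - σ))))
    (h1 : ∀ n θ, φ1 (n + 1) θ =
      φ2 n (θ / l) * ((σ / Λ) * φ1 n (θ / l) + 1 - σ / Λ) ^ (Λ : ℕ))
    (h2 : ∀ n θ, φ2 (n + 1) θ =
      φ2 n (θ / l) * ((σ / Λ) * φ1 n (θ / l) + 1 - σ / Λ) ^ (2 * k * Λ)) :
    ∀ n, ∀ θ > 0, φ1 n θ ≤ (1 + θ)⁻¹ ∧ φ2 n θ ≤ (1 + θ * (l - σ))⁻¹ :=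
  poincare_iterates_dominated_general σ hσ k Λ hσΛ l hroot hl φ1 φ2 h10 h20 h1 h2
end
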